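/- arXiv:2008.00133 — 2 statements merged into one kernel-verified Lean document; each statement's English description precedes it below -/
import Mathlib

section
/- For integers n ≥ 0, m ≥ 1, nonnegative integers a_1,…,a_{m-1}, and a_m ≥ 1, one has P_n(a_1,…,a_{m-1},a_m) = Σ_{y=1}^{a_m} P_n(a_1,…,a_{m-1}, a_m − 1, y). -/
/-- A Dyck path: a finite sequence of ±1 steps with all partial sums nonnegative
and total sum zero. -/
def IsDyckPath (p : List ℤ) : Prop :=
  (∀ s ∈ p, s = 1 ∨ s = -1) ∧ (∀ k, 0 ≤ (p.take k).sum) ∧ p.sum = 0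

/-- The height of a path: the maximum of its partial sums (0 for the empty path). -/
def pathHeight (p : List ℤ) : ℕ :=
  Finset.sup (Finset.range (p.length + 1)) (fun k => ((p.take k).sum).toNat)

/-- Super-Catalan numbers `T(m,n) = (2m)!(2n)!/(2·m!·n!·(m+n)!)`, as a rational number. -/
def superCatalan (m n : ℕ) : ℚ :=
  ((2 * m).factorial * (2 * n).factorial : ℚ) /
    (2 * m.factorial * n.factorial * (m + n).factorial)

/-- `G n m k`: the number of `m`-tuples of Dyck paths of total length `2n` all of whose
pairwise height differences are at most `k` (this is `0` when `n < 0`). -/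
noncomputable def G (n : ℤ) (m k : ℕ) : ℕ :=
  Nat.card {p : Fin m → List ℤ //
    (∀ i, IsDyckPath (p i)) ∧
    (∑ i, ((p i).length : ℤ)) = 2 * n ∧
    ∀ i j, |(pathHeight (p i) : ℤ) - (pathHeight (p j) : ℤ)| ≤ (k : ℤ)}

/-- The path-height function `P n [a₁,…,aₘ]`: the number of `m`-tuples of Dyck paths
of total length `2n` whose `i`-th path has height `aᵢ`. -/
noncomputable def P (n : ℤ) (a : List ℕ) : ℕ :=
  Nat.card {p : Fin a.length → List ℤ //
    (∀ i, IsDyckPath (p i)) ∧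
    (∑ i, ((p i).length : ℤ)) = 2 * n ∧
    ∀ i, pathHeight (p i) = a.get i}

/-- `Qx n x [a₀,…,a_k]` is `P n` evaluated at `a₀` copies of `x`, `a₁` copies of `x+1`, …,
`a_k` copies of `x+k`. -/
noncomputable def Qx (n : ℤ) (x : ℕ) (a : List ℕ) : ℕ :=
  P n (a.zipIdx.flatMap fun q => List.replicate q.1 (x + q.2))

/-- The grouped path-height function `Q n a = ∑_{x=0}^∞ Qx n x a`. Whenever some entry
of `a` is positive (as in every application below) all terms with `x > n` vanish, since
a Dyck path of height at least `x` has length at least `2x`; so the infinite sum equals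
its truncation at `x = n`. -/
noncomputable def Q (n : ℤ) (a : List ℕ) : ℕ :=
  ∑ x ∈ Finset.range (n.toNat + 1), Qx n x a

/-!
Only the last path of a tuple is touched, so the identity comes from a length-preserving
bijection between Dyck paths `π` of height `b + 1` and pairs `(σ, τ)` of Dyck paths with
`h(σ) = b` and `1 ≤ h(τ) ≤ b + 1`. Let `I` be the first visit of `π` to height `b + 1`,
`J < I` the last zero before it and `K` the last visit to `b + 1`; this cuts `π = d U A M D B`
with the up-step `U` at `J` and the down-step `D` at `K`. Put `σ = A B`, which first reaches `b`
at the end of `A`, and `τ = U d D M'`, where `M'` is `M` reflected so that it stays between `0`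
and `b + 1`. Conversely, `σ` is cut at its first visit to `b` and `τ` at its first return to `0`.
-/

namespace PathHeight

def partialSum (p : List ℤ) (k : ℕ) : ℤ := (p.take k).sum

section PartialSum

variable {p X Y : List ℤ} {k : ℕ}

@[simp] lemma partialSum_zero (p : List ℤ) : partialSum p 0 = 0 := by simp [partialSum]

@[simp] lemma partialSum_nil (k : ℕ) : partialSum [] k = 0 := by simp [partialSum]

@[simp] lemma partialSum_cons_succ (z : ℤ) (p : List ℤ) (k : ℕ) :
    partialSum (z :: p) (k + 1) = z + partialSum p k := by simp [partialSum]

lemma partialSum_of_length_le (h : p.length ≤ k) : partialSum p k = p.sum := by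
  rw [partialSum, List.take_of_length_le h]

@[simp] lemma partialSum_length (p : List ℤ) : partialSum p p.length = p.sum :=
  partialSum_of_length_le le_rfl

lemma partialSum_append (X Y : List ℤ) (k : ℕ) :
    partialSum (X ++ Y) k = partialSum X k + partialSum Y (k - X.length) := by
  rw [partialSum, List.take_append, List.sum_append]; rfl

lemma partialSum_append_of_le (h : k ≤ X.length) : partialSum (X ++ Y) k = partialSum X k := by
  simp [partialSum_append, Nat.sub_eq_zero_of_le h]

@[simp] lemma partialSum_length_add (X Y : List ℤ) (j : ℕ) :
    partialSum (X ++ Y) (X.length + j) = X.sum + partialSum Y j := by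
  rw [partialSum_append, partialSum_of_length_le (by omega), Nat.add_sub_cancel_left]

lemma partialSum_succ (h : k < p.length) : partialSum p (k + 1) = partialSum p k + p[k] :=
  List.sum_take_succ _ _ _

lemma partialSum_singleton (z : ℤ) (k : ℕ) : partialSum [z] k = if k = 0 then 0 else z := by
  cases k <;> simp

@[simp] lemma partialSum_map_neg (p : List ℤ) (k : ℕ) :
    partialSum (p.map Neg.neg) k = -partialSum p k := by
  simp [partialSum, ← List.map_take, List.sum_neg]

lemma partialSum_take (p : List ℤ) (j t : ℕ) :
    partialSum (p.take j) t = partialSum p (min t j) := by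
  rw [partialSum, List.take_take, partialSum]

lemma partialSum_drop (p : List ℤ) (i t : ℕ) :
    partialSum (p.drop i) t = partialSum p (i + t) - partialSum p i := by
  rcases le_or_gt i p.length with hi | hi
  · have h := partialSum_length_add (p.take i) (p.drop i) t
    rw [List.take_append_drop, List.length_take_of_le hi, ← partialSum_length,
      List.length_take_of_le hi, partialSum_take, min_self] at h
    linarith
  · rw [List.drop_eq_nil_of_le hi.le, partialSum_nil, partialSum_of_length_le hi.le,
      partialSum_of_length_le (by omega : p.length ≤ i + t), sub_self]

end PartialSum

section UnitSteps

variable {p X Y : List ℤ} {k : ℕ}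

def UnitSteps (p : List ℤ) : Prop := ∀ s ∈ p, s = 1 ∨ s = -1

@[simp] lemma unitSteps_cons (z : ℤ) :
    UnitSteps (z :: p) ↔ (z = 1 ∨ z = -1) ∧ UnitSteps p :=
  List.forall_mem_cons

@[simp] lemma unitSteps_append : UnitSteps (X ++ Y) ↔ UnitSteps X ∧ UnitSteps Y :=
  List.forall_mem_append

@[simp] lemma unitSteps_map_neg : UnitSteps (p.map Neg.neg) ↔ UnitSteps p := by
  simp only [UnitSteps, List.mem_map, forall_exists_index, and_imp, forall_apply_eq_imp_iff₂]
  exact forall₂_congr fun s _ => by omega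

lemma UnitSteps.partialSum_succ_eq (hs : UnitSteps p) (hk : k < p.length) :
    partialSum p (k + 1) = partialSum p k + 1 ∨ partialSum p (k + 1) = partialSum p k - 1 := by
  rw [partialSum_succ hk]
  rcases hs _ (List.getElem_mem hk) with h | h <;> simp [h, sub_eq_add_neg]

lemma finite_unitSteps_length_le (n : ℕ) :
    {l : List ℤ | l.length ≤ n ∧ UnitSteps l}.Finite := by
  refine ((List.finite_length_le Bool n).image
    (List.map fun β => if β then (1 : ℤ) else -1)).subset ?_
  rintro l ⟨hlen, hs⟩
  refine ⟨l.map (· = 1), by simpa using hlen, ?_⟩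
  rw [List.map_map]
  conv_rhs => rw [← List.map_id l]
  refine List.map_congr_left fun z hz => ?_
  rcases hs z hz with rfl | rfl <;> simp

end UnitSteps

section StaysIn

variable {p X Y : List ℤ} {lo hi : ℤ}

def StaysIn (p : List ℤ) (lo hi : ℤ) : Prop :=
  ∀ k, lo ≤ partialSum p k ∧ partialSum p k ≤ hi

lemma StaysIn.mono {lo' hi' : ℤ} (h : StaysIn p lo hi) (hlo : lo' ≤ lo) (hhi : hi ≤ hi') :
    StaysIn p lo' hi' :=
  fun k => ⟨hlo.trans (h k).1, (h k).2.trans hhi⟩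

lemma staysIn_append :
    StaysIn (X ++ Y) lo hi ↔ StaysIn X lo hi ∧ StaysIn Y (lo - X.sum) (hi - X.sum) := by
  refine ⟨fun h => ⟨fun k => ?_, fun k => ?_⟩, fun ⟨hX, hY⟩ k => ?_⟩
  · rcases le_or_gt k X.length with hk | hk
    · rw [← partialSum_append_of_le hk]; exact h k
    · rw [partialSum_of_length_le hk.le, ← partialSum_length, ← partialSum_append_of_le le_rfl]
      exact h _
  · have := h (X.length + k); rw [partialSum_length_add] at this; constructor <;> linarith
  · rw [partialSum_append]
    rcases le_or_gt k X.length with hk | hk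
    · simpa [Nat.sub_eq_zero_of_le hk] using hX k
    · rw [partialSum_of_length_le hk.le]
      have := hY (k - X.length); constructor <;> linarith

@[simp] lemma staysIn_singleton (z : ℤ) :
    StaysIn [z] lo hi ↔ lo ≤ 0 ∧ 0 ≤ hi ∧ lo ≤ z ∧ z ≤ hi := by
  refine ⟨fun h => ⟨(h 0).1.trans_eq (by simp), (by simpa using (h 0).2), ?_, ?_⟩,
    fun h k => ?_⟩
  · simpa [partialSum_singleton] using (h 1).1
  · simpa [partialSum_singleton] using (h 1).2
  · rw [partialSum_singleton]; split <;> omega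

@[simp] lemma staysIn_map_neg : StaysIn (p.map Neg.neg) lo hi ↔ StaysIn p (-hi) (-lo) := by
  simp only [StaysIn, partialSum_map_neg]
  exact forall_congr' fun k => by omega

end StaysIn

section Segment

variable {p : List ℤ} {i j k : ℕ} {lo hi : ℤ}

def segment (p : List ℤ) (i j : ℕ) : List ℤ := (p.take j).drop i

lemma partialSum_segment (hij : i ≤ j) (t : ℕ) :
    partialSum (segment p i j) t = partialSum p (min (i + t) j) - partialSum p i := by
  rw [segment, partialSum_drop, partialSum_take, partialSum_take, min_eq_left hij]

lemma sum_segment (hij : i ≤ j) : (segment p i j).sum = partialSum p j - partialSum p i := by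
  have hlen : (segment p i j).length ≤ j - i := by simp [segment]; omega
  rw [← partialSum_of_length_le hlen, partialSum_segment hij, Nat.add_sub_cancel' hij, min_self]

lemma staysIn_segment (hij : i ≤ j)
    (h : ∀ t, i ≤ t → t ≤ j → lo ≤ partialSum p t - partialSum p i ∧
      partialSum p t - partialSum p i ≤ hi) :
    StaysIn (segment p i j) lo hi := fun t => by
  rw [partialSum_segment hij]; exact h _ (by omega) (by omega)

lemma length_segment (hj : j ≤ p.length) : (segment p i j).length = j - i := by
  simp [segment]; omega

lemma mem_of_mem_segment {s : ℤ} (h : s ∈ segment p i j) : s ∈ p :=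
  List.mem_of_mem_take (List.mem_of_mem_drop h)

lemma segment_append_segment (hij : i ≤ j) (hjk : j ≤ k) :
    segment p i j ++ segment p j k = segment p i k := by
  rcases le_or_gt i p.length with hi | hi
  · have h := List.take_append_drop j (p.take k)
    rw [List.take_take, min_eq_left hjk] at h
    rw [segment, segment, segment]
    conv_rhs => rw [← h]
    rw [List.drop_append_of_le_length (by simp [hij, hi])]
  · have hnil : ∀ {a b : ℕ}, i ≤ a → (p.take b).drop a = [] := fun ha =>
      List.drop_eq_nil_of_le ((List.length_take_le' _ _).trans (by omega))
    rw [segment, segment, segment, hnil le_rfl, hnil hij, hnil le_rfl, List.nil_append]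

lemma segment_succ (h : i < p.length) : segment p i (i + 1) = [p[i]] := by
  simp [segment, List.drop_take, List.take_one, List.head?_drop, List.getElem?_eq_getElem h]

lemma segment_append_append (X Y Z : List ℤ) :
    segment (X ++ Y ++ Z) X.length (X.length + Y.length) = Y := by
  rw [segment, List.take_left' (by simp), List.drop_left' rfl]

lemma UnitSteps.segment (hs : UnitSteps p) (i j : ℕ) : UnitSteps (segment p i j) :=
  fun _ h => hs _ (mem_of_mem_segment h)

lemma segment_succ_eq_singleton {z : ℤ} (hk : k < p.length)
    (h : partialSum p (k + 1) = partialSum p k + z) : segment p k (k + 1) = [z] := by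
  rw [segment_succ hk, partialSum_succ hk] at *
  simp only [List.cons.injEq, and_true]
  linarith

@[simp] lemma segment_zero_length (p : List ℤ) : segment p 0 p.length = p := by simp [segment]

end Segment

section Height

variable {p : List ℤ} {a k : ℕ} {lo hi : ℤ}

lemma pathHeight_le_iff : pathHeight p ≤ a ↔ ∀ k, partialSum p k ≤ a := by
  refine ⟨fun h k => ?_, fun h => Finset.sup_le fun k _ => Int.toNat_le.mpr (h k)⟩
  have hsup : ∀ k ≤ p.length, partialSum p k ≤ a := fun k hk =>
    Int.toNat_le.mp (Finset.sup_le_iff.mp h k (Finset.mem_range.mpr (by omega)))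
  rcases le_or_gt k p.length with hk | hk
  · exact hsup k hk
  · rw [partialSum_of_length_le hk.le, ← partialSum_length]; exact hsup _ le_rfl

lemma le_pathHeight (k : ℕ) (h : (a : ℤ) ≤ partialSum p k) : a ≤ pathHeight p := by
  by_contra hlt
  have := pathHeight_le_iff.mp (Nat.le_sub_one_of_lt (not_le.mp hlt)) k
  omega

lemma exists_partialSum_eq_pathHeight (p : List ℤ) :
    ∃ k ≤ p.length, partialSum p k = pathHeight p := by
  obtain ⟨k, hk, hsup⟩ := Finset.exists_mem_eq_sup (Finset.range (p.length + 1))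
    ⟨0, by simp⟩ fun k => (partialSum p k).toNat
  rcases le_or_gt 0 (partialSum p k) with hnn | hneg
  · exact ⟨k, by simpa [Nat.lt_succ_iff] using hk, by
      rw [show pathHeight p = _ from hsup, Int.toNat_of_nonneg hnn]⟩
  · exact ⟨0, by simp, by
      rw [show pathHeight p = _ from hsup, Int.toNat_of_nonpos hneg.le]; simp⟩

lemma _root_.IsDyckPath.unitSteps (hp : IsDyckPath p) : UnitSteps p := hp.1

lemma _root_.IsDyckPath.sum_eq_zero (hp : IsDyckPath p) : p.sum = 0 := hp.2.2

lemma _root_.IsDyckPath.staysIn (hp : IsDyckPath p) : StaysIn p 0 (pathHeight p) :=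
  fun k => ⟨hp.2.1 k, pathHeight_le_iff.mp le_rfl k⟩

lemma isDyckPath_of_staysIn (hs : UnitSteps p) (hin : StaysIn p 0 hi)
    (hsum : p.sum = 0) : IsDyckPath p :=
  ⟨hs, fun k => (hin k).1, hsum⟩

lemma pathHeight_eq_of_staysIn (hin : StaysIn p lo a) (hk : partialSum p k = a) :
    pathHeight p = a :=
  le_antisymm (pathHeight_le_iff.mpr fun t => (hin t).2) (le_pathHeight k hk.ge)

end Height

section Hit

variable {p X Y : List ℤ} {v : ℤ} {k t n : ℕ}

/-- `0` when `v` is never hit. -/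
noncomputable def firstHit (p : List ℤ) (v : ℤ) : ℕ := sInf {k | partialSum p k = v}

lemma partialSum_firstHit (h : partialSum p k = v) : partialSum p (firstHit p v) = v :=
  Nat.sInf_mem (s := {k | partialSum p k = v}) ⟨k, h⟩

lemma firstHit_le (h : partialSum p k = v) : firstHit p v ≤ k := Nat.sInf_le h

lemma partialSum_ne_of_lt_firstHit (ht : t < firstHit p v) : partialSum p t ≠ v :=
  Nat.notMem_of_lt_sInf ht

lemma firstHit_append (hX : X.sum = v) (hlt : ∀ t < X.length, partialSum X t ≠ v) :
    firstHit (X ++ Y) v = X.length := by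
  have hX' : partialSum (X ++ Y) X.length = v := by
    rw [partialSum_append_of_le le_rfl, partialSum_length, hX]
  refine le_antisymm (firstHit_le hX') (not_lt.mp fun h => hlt _ h ?_)
  rw [← partialSum_append_of_le (Y := Y) h.le]
  exact partialSum_firstHit hX'

/-- `0` when `v` is not hit in `[0, n]`. -/
def lastHit (p : List ℤ) (v : ℤ) (n : ℕ) : ℕ :=
  Nat.findGreatest (fun k => partialSum p k = v) n

lemma lastHit_le (p : List ℤ) (v : ℤ) (n : ℕ) : lastHit p v n ≤ n := Nat.findGreatest_le n

lemma partialSum_lastHit (hk : k ≤ n) (h : partialSum p k = v) :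
    partialSum p (lastHit p v n) = v :=
  Nat.findGreatest_spec (P := fun k => partialSum p k = v) hk h

lemma partialSum_lastHit_zero (p : List ℤ) (n : ℕ) : partialSum p (lastHit p 0 n) = 0 :=
  partialSum_lastHit (Nat.zero_le n) (partialSum_zero p)

lemma le_lastHit (hk : k ≤ n) (h : partialSum p k = v) : k ≤ lastHit p v n :=
  Nat.le_findGreatest hk h

lemma partialSum_ne_of_lastHit_lt (ht : lastHit p v n < t) (htn : t ≤ n) :
    partialSum p t ≠ v :=
  Nat.findGreatest_is_greatest ht htn

lemma lastHit_append (hX : X.sum = v) (hn : X.length ≤ n)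
    (hY : ∀ t, 0 < t → X.length + t ≤ n → partialSum Y t ≠ 0) :
    lastHit (X ++ Y) v n = X.length := by
  refine Nat.findGreatest_eq_iff.mpr ⟨hn, fun _ => ?_, fun t ht htn => ?_⟩
  · simp [partialSum_append_of_le le_rfl (Y := Y), hX]
  · obtain ⟨u, rfl⟩ := Nat.exists_eq_add_of_lt ht
    have := hY (u + 1) (by omega) (by omega)
    rw [add_assoc, partialSum_length_add, hX]
    omega

lemma partialSum_firstHit_pathHeight (p : List ℤ) :
    partialSum p (firstHit p (pathHeight p)) = pathHeight p :=
  let ⟨_, _, h⟩ := exists_partialSum_eq_pathHeight p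
  partialSum_firstHit h

lemma firstHit_pathHeight_le_length (p : List ℤ) : firstHit p (pathHeight p) ≤ p.length :=
  let ⟨_, hk, h⟩ := exists_partialSum_eq_pathHeight p
  (firstHit_le h).trans hk

end Hit

noncomputable def firstPeak (b : ℕ) (p : List ℤ) : ℕ := firstHit p (b + 1)

noncomputable def lastZeroBeforePeak (b : ℕ) (p : List ℤ) : ℕ := lastHit p 0 (firstPeak b p)

noncomputable def lastPeak (b : ℕ) (p : List ℤ) : ℕ := lastHit p (b + 1) p.length

section PeakIndices

variable {b : ℕ} {p : List ℤ} {t : ℕ} (hh : pathHeight p = b + 1)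
include hh

lemma staysIn_of_pathHeight_eq (hp : IsDyckPath p) : StaysIn p 0 (b + 1) := by
  have := hp.staysIn
  rwa [hh, Nat.cast_succ] at this

lemma partialSum_firstPeak : partialSum p (firstPeak b p) = b + 1 := by
  simpa [firstPeak, hh] using partialSum_firstHit_pathHeight p

lemma firstPeak_le_length : firstPeak b p ≤ p.length := by
  simpa [firstPeak, hh] using firstHit_pathHeight_le_length p

lemma partialSum_le_of_lt_firstPeak (hp : IsDyckPath p) (ht : t < firstPeak b p) :
    partialSum p t ≤ b := by
  have := partialSum_ne_of_lt_firstHit ht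
  have := (staysIn_of_pathHeight_eq hh hp t).2
  omega

omit hh in
lemma partialSum_lastZeroBeforePeak : partialSum p (lastZeroBeforePeak b p) = 0 :=
  partialSum_lastHit_zero p (firstPeak b p)

lemma lastZeroBeforePeak_lt_firstPeak : lastZeroBeforePeak b p < firstPeak b p := by
  refine (lastHit_le _ _ _).lt_of_ne fun h => ?_
  have := partialSum_lastZeroBeforePeak (b := b) (p := p)
  rw [lastZeroBeforePeak, h, partialSum_firstPeak hh] at this
  omega

lemma one_le_partialSum_of_lastZeroBeforePeak_lt (hp : IsDyckPath p)
    (h₁ : lastZeroBeforePeak b p < t) (h₂ : t ≤ firstPeak b p) : 1 ≤ partialSum p t := by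
  have := partialSum_ne_of_lastHit_lt h₁ h₂
  have := (staysIn_of_pathHeight_eq hh hp t).1
  omega

lemma partialSum_lastZeroBeforePeak_succ (hp : IsDyckPath p) :
    partialSum p (lastZeroBeforePeak b p + 1) = 1 := by
  have h1 := lastZeroBeforePeak_lt_firstPeak hh
  have := one_le_partialSum_of_lastZeroBeforePeak_lt hh hp (Nat.lt_add_one _) h1
  have := partialSum_lastZeroBeforePeak (b := b) (p := p)
  have := firstPeak_le_length hh
  rcases hp.unitSteps.partialSum_succ_eq (k := lastZeroBeforePeak b p) (by omega)
    with h | h <;> omega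

lemma segment_lastZeroBeforePeak (hp : IsDyckPath p) :
    segment p (lastZeroBeforePeak b p) (lastZeroBeforePeak b p + 1) = [1] := by
  have := lastZeroBeforePeak_lt_firstPeak hh
  have := firstPeak_le_length hh
  refine segment_succ_eq_singleton (by omega) ?_
  rw [partialSum_lastZeroBeforePeak_succ hh hp, partialSum_lastZeroBeforePeak, zero_add]

lemma partialSum_lastPeak : partialSum p (lastPeak b p) = b + 1 :=
  partialSum_lastHit (firstPeak_le_length hh) (partialSum_firstPeak hh)

lemma firstPeak_le_lastPeak : firstPeak b p ≤ lastPeak b p :=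
  le_lastHit (firstPeak_le_length hh) (partialSum_firstPeak hh)

lemma lastPeak_lt_length (hp : IsDyckPath p) : lastPeak b p < p.length := by
  refine (lastHit_le _ _ _).lt_of_ne fun h => ?_
  have := partialSum_lastPeak hh
  rw [lastPeak, h, partialSum_length, hp.sum_eq_zero] at this
  omega

lemma partialSum_le_of_lastPeak_lt (hp : IsDyckPath p) (ht : lastPeak b p < t) :
    partialSum p t ≤ b := by
  rcases le_or_gt t p.length with htn | htn
  · have := partialSum_ne_of_lastHit_lt ht htn
    have := (staysIn_of_pathHeight_eq hh hp t).2
    omega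
  · rw [partialSum_of_length_le htn.le, hp.sum_eq_zero]; omega

lemma partialSum_lastPeak_succ (hp : IsDyckPath p) : partialSum p (lastPeak b p + 1) = b := by
  have := partialSum_le_of_lastPeak_lt hh hp (Nat.lt_add_one _)
  have := partialSum_lastPeak hh
  rcases hp.unitSteps.partialSum_succ_eq (lastPeak_lt_length hh hp) with h | h <;> omega

lemma segment_lastPeak (hp : IsDyckPath p) :
    segment p (lastPeak b p) (lastPeak b p + 1) = [-1] := by
  refine segment_succ_eq_singleton (lastPeak_lt_length hh hp) ?_
  rw [partialSum_lastPeak_succ hh hp, partialSum_lastPeak hh]; ring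

end PeakIndices

section FirstReturn

variable {q : List ℤ} {b : ℕ} {t : ℕ} (hsum : q.sum = -1)
include hsum

lemma partialSum_firstHit_neg_one : partialSum q (firstHit q (-1)) = -1 :=
  partialSum_firstHit (k := q.length) (by rw [partialSum_length, hsum])

lemma firstHit_neg_one_le_length : firstHit q (-1) ≤ q.length :=
  firstHit_le (by rw [partialSum_length, hsum])

lemma one_le_firstHit_neg_one : 1 ≤ firstHit q (-1) := by
  by_contra h
  have := partialSum_firstHit_neg_one hsum
  rw [show firstHit q (-1) = 0 by omega, partialSum_zero] at this
  omega

omit hsum in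
lemma nonneg_of_lt_firstHit_neg_one (hin : StaysIn q (-1) b) (ht : t < firstHit q (-1)) :
    0 ≤ partialSum q t := by
  have := partialSum_ne_of_lt_firstHit ht; have := (hin t).1; omega

lemma segment_firstHit_neg_one (hs : UnitSteps q) (hin : StaysIn q (-1) b) :
    segment q (firstHit q (-1) - 1) (firstHit q (-1)) = [-1] ∧
      partialSum q (firstHit q (-1) - 1) = 0 := by
  have h1 := one_le_firstHit_neg_one hsum
  have hr := partialSum_firstHit_neg_one hsum
  have hle := firstHit_neg_one_le_length hsum
  have hnn := nonneg_of_lt_firstHit_neg_one hin (t := firstHit q (-1) - 1) (by omega)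
  obtain ⟨r, hr'⟩ : ∃ r, firstHit q (-1) = r + 1 := ⟨_, (Nat.succ_pred_eq_of_pos h1).symm⟩
  rw [hr', Nat.add_sub_cancel] at hnn ⊢
  rw [hr'] at hr hle
  have hstep := hs.partialSum_succ_eq (k := r) (by omega)
  have h0 : partialSum q r = 0 := by omega
  exact ⟨segment_succ_eq_singleton (by omega) (by rw [hr, h0]; ring), h0⟩

end FirstReturn

/-- The pieces `d, A, M, B` of `π = d ++ [1] ++ A ++ M ++ [-1] ++ B`, cut at
`lastZeroBeforePeak`, `firstPeak` and `lastPeak`. In `IsValid` each piece is measured from the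
level at which it starts in `π`. -/
structure Decomposition where
  base : List ℤ
  ascent : List ℤ
  plateau : List ℤ
  descent : List ℤ

namespace Decomposition

structure IsValid (D : Decomposition) (b : ℕ) : Prop where
  base_steps : UnitSteps D.base
  ascent_steps : UnitSteps D.ascent
  plateau_steps : UnitSteps D.plateau
  descent_steps : UnitSteps D.descent
  base_staysIn : StaysIn D.base 0 b
  base_sum : D.base.sum = 0
  ascent_staysIn : StaysIn D.ascent 0 b
  ascent_sum : D.ascent.sum = b
  ascent_ne : ∀ t < D.ascent.length, partialSum D.ascent t ≠ b
  plateau_staysIn : StaysIn D.plateau (-(b + 1)) 0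
  plateau_sum : D.plateau.sum = 0
  descent_staysIn : StaysIn D.descent (-b) 0
  descent_sum : D.descent.sum = -b

variable (D : Decomposition)

def toPath : List ℤ := D.base ++ [1] ++ D.ascent ++ D.plateau ++ [-1] ++ D.descent

def toPair : List ℤ × List ℤ :=
  (D.ascent ++ D.descent, [1] ++ (D.base ++ [-1] ++ D.plateau.map Neg.neg))

noncomputable def ofPath (b : ℕ) (p : List ℤ) : Decomposition :=
  ⟨segment p 0 (lastZeroBeforePeak b p), segment p (lastZeroBeforePeak b p + 1) (firstPeak b p),
    segment p (firstPeak b p) (lastPeak b p), segment p (lastPeak b p + 1) p.length⟩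

/-- The inverse of `toPair`: `σ` is cut at its first visit to `b`, and `τ = 1 :: τ'` at its first
return to `0`, i.e. at the first visit of `τ'` to `-1`. -/
noncomputable def ofPair (b : ℕ) (st : List ℤ × List ℤ) : Decomposition :=
  let s := firstHit st.1 b
  let τ' := st.2.tail
  let r := firstHit τ' (-1)
  ⟨segment τ' 0 (r - 1), segment st.1 0 s, (segment τ' r τ'.length).map Neg.neg,
    segment st.1 s st.1.length⟩

lemma length_toPath : D.toPath.length = D.toPair.1.length + D.toPair.2.length := by
  simp [toPath, toPair]; omega

lemma toPath_eq : D.toPath = (D.base ++ 1 :: D.ascent) ++ (D.plateau ++ -1 :: D.descent) := by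
  simp [toPath]

section Valid

variable {D} {b : ℕ} {t : ℕ} (hD : D.IsValid b)
include hD

lemma IsValid.staysIn_toPath : StaysIn D.toPath 0 (b + 1) := by
  simp only [toPath, staysIn_append, staysIn_singleton, List.sum_append, List.sum_singleton,
    hD.base_sum, hD.ascent_sum, hD.plateau_sum]
  exact ⟨⟨⟨⟨⟨hD.base_staysIn.mono le_rfl (by omega), by omega⟩,
    hD.ascent_staysIn.mono (by omega) (by omega)⟩,
    hD.plateau_staysIn.mono (by omega) (by omega)⟩, by omega⟩,
    hD.descent_staysIn.mono (by omega) (by omega)⟩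

lemma IsValid.isDyckPath_toPath : IsDyckPath D.toPath := by
  refine isDyckPath_of_staysIn ?_ hD.staysIn_toPath ?_
  · simp [toPath, hD.base_steps, hD.ascent_steps, hD.plateau_steps, hD.descent_steps]
  · simp [toPath, hD.base_sum, hD.ascent_sum, hD.plateau_sum, hD.descent_sum]

lemma IsValid.partialSum_base_ascent_ne (ht : t < D.base.length + 1 + D.ascent.length) :
    partialSum (D.base ++ 1 :: D.ascent) t ≠ b + 1 := by
  rcases le_or_gt t D.base.length with h | h
  · rw [partialSum_append_of_le h]; have := (hD.base_staysIn t).2; omega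
  · obtain ⟨u, rfl⟩ := Nat.exists_eq_add_of_lt h
    rw [add_assoc, partialSum_length_add, partialSum_cons_succ, hD.base_sum]
    have := hD.ascent_ne u (by omega); have := (hD.ascent_staysIn u).2; omega

lemma IsValid.firstPeak_toPath :
    firstPeak b D.toPath = D.base.length + 1 + D.ascent.length := by
  rw [firstPeak, toPath_eq, firstHit_append (by simp [hD.base_sum, hD.ascent_sum]; ring)
    fun t ht => hD.partialSum_base_ascent_ne (by simp at ht; omega)]
  simp; ring

lemma IsValid.partialSum_toPath_peak :
    partialSum D.toPath (D.base.length + 1 + D.ascent.length) = b + 1 := by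
  rw [toPath_eq, partialSum_append_of_le (by simp; omega),
    partialSum_of_length_le (by simp; omega)]
  simp [hD.base_sum, hD.ascent_sum]; ring

lemma IsValid.pathHeight_toPath : pathHeight D.toPath = b + 1 :=
  pathHeight_eq_of_staysIn (by exact_mod_cast hD.staysIn_toPath)
    (by exact_mod_cast hD.partialSum_toPath_peak)

lemma IsValid.lastZeroBeforePeak_toPath : lastZeroBeforePeak b D.toPath = D.base.length := by
  rw [lastZeroBeforePeak, hD.firstPeak_toPath]
  simp only [toPath, List.append_assoc]
  refine lastHit_append hD.base_sum (by omega) fun t ht htn => ?_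
  obtain ⟨u, rfl⟩ := Nat.exists_eq_add_of_lt ht
  rw [zero_add, List.singleton_append, partialSum_cons_succ,
    partialSum_append_of_le (by omega)]
  have := (hD.ascent_staysIn u).1; omega

lemma IsValid.lastPeak_toPath :
    lastPeak b D.toPath = D.base.length + 1 + D.ascent.length + D.plateau.length := by
  rw [lastPeak, toPath, List.append_assoc _ [-1]]
  refine (lastHit_append (by simp [hD.base_sum, hD.ascent_sum, hD.plateau_sum]; ring)
    (by simp) fun t ht _ => ?_).trans (by simp; ring)
  obtain ⟨u, rfl⟩ := Nat.exists_eq_add_of_lt ht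
  rw [zero_add, List.singleton_append, partialSum_cons_succ]
  have := (hD.descent_staysIn u).2; omega

lemma IsValid.ofPath_toPath : ofPath b D.toPath = D := by
  simp only [ofPath, hD.firstPeak_toPath, hD.lastZeroBeforePeak_toPath, hD.lastPeak_toPath]
  obtain ⟨d, A, M, B⟩ := D
  simp only [toPath, mk.injEq]
  refine ⟨?_, ?_, ?_, ?_⟩
  · convert segment_append_append [] d ([1] ++ A ++ M ++ [-1] ++ B) using 2 <;> simp
  · convert segment_append_append (d ++ [1]) A (M ++ [-1] ++ B) using 2 <;> simp
  · convert segment_append_append (d ++ [1] ++ A) M ([-1] ++ B) using 2 <;> simp <;> omega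
  · convert segment_append_append (d ++ [1] ++ A ++ M ++ [-1]) B [] using 2 <;> simp <;> omega

lemma IsValid.staysIn_toPair_fst : StaysIn D.toPair.1 0 b := by
  simp only [toPair, staysIn_append, hD.ascent_sum]
  exact ⟨hD.ascent_staysIn, hD.descent_staysIn.mono (by omega) (by omega)⟩

lemma IsValid.staysIn_toPair_snd : StaysIn D.toPair.2 0 (b + 1) := by
  simp only [toPair, staysIn_append, staysIn_singleton, staysIn_map_neg, List.sum_append,
    List.sum_singleton, hD.base_sum]
  exact ⟨by omega, ⟨hD.base_staysIn.mono (by omega) (by omega), by omega⟩,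
    hD.plateau_staysIn.mono (by omega) (by omega)⟩

lemma IsValid.toPair_mem : IsDyckPath D.toPair.1 ∧ pathHeight D.toPair.1 = b ∧
    IsDyckPath D.toPair.2 ∧ 1 ≤ pathHeight D.toPair.2 ∧ pathHeight D.toPair.2 ≤ b + 1 := by
  refine ⟨isDyckPath_of_staysIn ?_ hD.staysIn_toPair_fst ?_,
    pathHeight_eq_of_staysIn hD.staysIn_toPair_fst (k := D.ascent.length) ?_,
    isDyckPath_of_staysIn ?_ hD.staysIn_toPair_snd ?_,
    le_pathHeight 1 (by simp [toPair]),
    pathHeight_le_iff.mpr fun k => by exact_mod_cast (hD.staysIn_toPair_snd k).2⟩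
  · simp [toPair, hD.ascent_steps, hD.descent_steps]
  · simp [toPair, hD.ascent_sum, hD.descent_sum]
  · simp [toPair, partialSum_append_of_le le_rfl, hD.ascent_sum]
  · simp [toPair, hD.base_steps, hD.plateau_steps]
  · simp [toPair, hD.base_sum, ← List.sum_neg, hD.plateau_sum]

lemma IsValid.ofPair_toPair : ofPair b D.toPair = D := by
  have hτ : D.toPair.2.tail = (D.base ++ [-1]) ++ D.plateau.map Neg.neg := rfl
  have hr : firstHit D.toPair.2.tail (-1) = D.base.length + 1 := by
    rw [hτ, firstHit_append (by simp [hD.base_sum]) fun t ht => ?_]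
    · simp
    · simp at ht
      rw [partialSum_append_of_le (by omega)]; have := (hD.base_staysIn t).1; omega
  have hs : firstHit D.toPair.1 b = D.ascent.length := firstHit_append hD.ascent_sum hD.ascent_ne
  simp only [ofPair, hr, hs, Nat.add_sub_cancel]
  obtain ⟨d, A, M, B⟩ := D
  simp only [toPair, List.singleton_append, List.tail_cons, mk.injEq]
  refine ⟨?_, ?_, ?_, ?_⟩
  · convert segment_append_append [] d ([-1] ++ M.map Neg.neg) using 2 <;> simp
  · convert segment_append_append [] A B using 2 <;> simp
  · convert congrArg (List.map Neg.neg) (segment_append_append (d ++ [-1]) (M.map Neg.neg) [])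
      using 3 <;> simp; ring
  · convert segment_append_append A B [] using 2 <;> simp

end Valid

section OfPath

variable {b : ℕ} {p : List ℤ} (hh : pathHeight p = b + 1) (hp : IsDyckPath p)
include hh hp

lemma isValid_ofPath : (ofPath b p).IsValid b := by
  have hIn := firstPeak_le_length hh
  have hJI := lastZeroBeforePeak_lt_firstPeak hh
  have hIK := firstPeak_le_lastPeak hh
  have hKn := lastPeak_lt_length hh hp
  have hin := staysIn_of_pathHeight_eq hh hp
  rw [ofPath]
  refine ⟨hp.unitSteps.segment _ _, hp.unitSteps.segment _ _, hp.unitSteps.segment _ _,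
    hp.unitSteps.segment _ _, ?_, ?_, ?_, ?_, ?_, ?_, ?_, ?_, ?_⟩
  · exact staysIn_segment (Nat.zero_le _) fun t _ ht => by
      have := hin t; have := partialSum_le_of_lt_firstPeak hh hp (t := t) (by omega); simp; omega
  · rw [sum_segment (Nat.zero_le _), partialSum_lastZeroBeforePeak, partialSum_zero, sub_zero]
  · exact staysIn_segment (by omega) fun t ht ht' => by
      have := hin t
      have := one_le_partialSum_of_lastZeroBeforePeak_lt hh hp (t := t) (by omega) ht'
      rw [partialSum_lastZeroBeforePeak_succ hh hp]; omega
  · rw [sum_segment (by omega), partialSum_firstPeak hh, partialSum_lastZeroBeforePeak_succ hh hp]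
    ring
  · intro t ht
    rw [length_segment hIn] at ht
    rw [partialSum_segment (by omega), min_eq_left (by omega),
      partialSum_lastZeroBeforePeak_succ hh hp]
    have := partialSum_le_of_lt_firstPeak hh hp (t := lastZeroBeforePeak b p + 1 + t) (by omega)
    omega
  · exact staysIn_segment hIK fun t _ _ => by
      have := hin t; rw [partialSum_firstPeak hh]; omega
  · rw [sum_segment hIK, partialSum_lastPeak hh, partialSum_firstPeak hh, sub_self]
  · exact staysIn_segment (by omega) fun t ht _ => by
      have := hin t; have := partialSum_le_of_lastPeak_lt hh hp (t := t) (by omega)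
      rw [partialSum_lastPeak_succ hh hp]; omega
  · rw [sum_segment (by omega), partialSum_length, hp.sum_eq_zero, partialSum_lastPeak_succ hh hp,
      zero_sub]

lemma toPath_ofPath : (ofPath b p).toPath = p := by
  have hJI := lastZeroBeforePeak_lt_firstPeak hh
  have hIK := firstPeak_le_lastPeak hh
  have hKn := lastPeak_lt_length hh hp
  rw [ofPath, toPath, ← segment_lastZeroBeforePeak hh hp, ← segment_lastPeak hh hp,
    segment_append_segment (by omega) (by omega), segment_append_segment (by omega) (by omega),
    segment_append_segment (by omega) hIK, segment_append_segment (by omega) (by omega),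
    segment_append_segment (by omega) (by omega), segment_zero_length]

end OfPath

lemma _root_.IsDyckPath.eq_one_cons_tail {τ : List ℤ} {b : ℕ} (hτ : IsDyckPath τ)
    (h1 : 1 ≤ pathHeight τ) (h2 : pathHeight τ ≤ b + 1) :
    τ = [1] ++ τ.tail ∧ UnitSteps τ.tail ∧ StaysIn τ.tail (-1) b ∧ τ.tail.sum = -1 := by
  obtain _ | ⟨z, q⟩ := τ
  · simp [pathHeight] at h1
  have hz : z = 1 := by
    have h0 := (hτ.staysIn 1).1
    simp only [partialSum_cons_succ, partialSum_zero, add_zero] at h0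
    rcases hτ.unitSteps z List.mem_cons_self with h | h <;> omega
  subst hz
  have hin : StaysIn _ 0 (b + 1) := hτ.staysIn.mono le_rfl (by exact_mod_cast h2)
  rw [← List.singleton_append, staysIn_append] at hin
  have hsum := hτ.sum_eq_zero
  simp only [List.sum_cons] at hsum
  exact ⟨rfl, ((unitSteps_cons 1).mp hτ.unitSteps).2, hin.2.mono (by simp) (by simp),
    by simp; omega⟩

section OfPair

variable {b : ℕ} {σ τ : List ℤ} (hσ : IsDyckPath σ) (hσh : pathHeight σ = b)
  (hτ : IsDyckPath τ) (hτ1 : 1 ≤ pathHeight τ) (hτb : pathHeight τ ≤ b + 1)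
include hσ hσh hτ hτ1 hτb

lemma isValid_ofPair : (ofPair b (σ, τ)).IsValid b := by
  obtain ⟨-, hqs, hqin, hqsum⟩ := hτ.eq_one_cons_tail hτ1 hτb
  have hin : StaysIn σ 0 b := hσh ▸ hσ.staysIn
  have hs := hσh ▸ partialSum_firstHit_pathHeight σ
  have hsn := hσh ▸ firstHit_pathHeight_le_length σ
  have hsne : ∀ t, t < firstHit σ b → partialSum σ t ≠ b :=
    fun _ => partialSum_ne_of_lt_firstHit
  have hr := partialSum_firstHit_neg_one hqsum
  have hrn := firstHit_neg_one_le_length hqsum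
  have hr1 := one_le_firstHit_neg_one hqsum
  have hrnn : ∀ t, t < firstHit τ.tail (-1) → 0 ≤ partialSum τ.tail t := fun t =>
    nonneg_of_lt_firstHit_neg_one hqin
  have hr0 := (segment_firstHit_neg_one hqsum hqs hqin).2
  simp only [ofPair]
  generalize firstHit σ b = s at *
  generalize τ.tail = q at *
  generalize firstHit q (-1) = r at *
  refine ⟨hqs.segment _ _, hσ.unitSteps.segment _ _, unitSteps_map_neg.mpr (hqs.segment _ _),
    hσ.unitSteps.segment _ _, ?_, ?_, ?_, ?_, ?_, ?_, ?_, ?_, ?_⟩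
  · exact staysIn_segment (Nat.zero_le _) fun t _ ht =>
      by have := hqin t; have := hrnn t (by omega); simp; omega
  · rw [sum_segment (Nat.zero_le _), hr0, partialSum_zero, sub_zero]
  · exact staysIn_segment (Nat.zero_le _) fun t _ _ => by have := hin t; simp; omega
  · rw [sum_segment (Nat.zero_le _), hs, partialSum_zero, sub_zero]
  · intro t ht
    rw [length_segment hsn] at ht
    rw [partialSum_segment (Nat.zero_le _), zero_add, min_eq_left (by omega), partialSum_zero,
      sub_zero]
    exact hsne t (by omega)
  · exact staysIn_map_neg.mpr <| staysIn_segment hrn fun t _ _ => by have := hqin t; omega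
  · rw [← List.sum_neg, sum_segment hrn, partialSum_length, hqsum, hr]; ring
  · exact staysIn_segment hsn fun t _ _ => by have := hin t; omega
  · rw [sum_segment hsn, partialSum_length, hσ.sum_eq_zero, hs, zero_sub]

omit hσ in
lemma toPair_ofPair : (ofPair b (σ, τ)).toPair = (σ, τ) := by
  obtain ⟨hτeq, hqs, hqin, hqsum⟩ := hτ.eq_one_cons_tail hτ1 hτb
  have hsn := hσh ▸ firstHit_pathHeight_le_length σ
  have hrn := firstHit_neg_one_le_length hqsum
  have hr1 := one_le_firstHit_neg_one hqsum
  have hseg := (segment_firstHit_neg_one hqsum hqs hqin).1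
  simp only [ofPair, toPair, List.map_map, neg_comp_neg, List.map_id]
  rw [segment_append_segment (Nat.zero_le _) hsn, segment_zero_length, ← hseg,
    segment_append_segment (Nat.zero_le _) (by omega), segment_append_segment (by omega) hrn,
    segment_zero_length, ← hτeq]

end OfPair
end Decomposition

section Tuples

variable {m : ℕ} {N : ℤ}

def IsTuple (N : ℤ) (h : Fin m → ℕ) (p : Fin m → List ℤ) : Prop :=
  (∀ i, IsDyckPath (p i)) ∧ (∑ i, ((p i).length : ℤ)) = N ∧ ∀ i, pathHeight (p i) = h i

lemma isTuple_snoc {h : Fin m → ℕ} {a : ℕ} {q : Fin m → List ℤ} {x : List ℤ} :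
    IsTuple N (Fin.snoc h a) (Fin.snoc q x) ↔
      IsTuple (N - x.length) h q ∧ IsDyckPath x ∧ pathHeight x = a := by
  simp only [IsTuple, Fin.forall_fin_succ', Fin.snoc_castSucc, Fin.snoc_last,
    Fin.sum_univ_castSucc]
  constructor
  · rintro ⟨⟨hq, hx⟩, hN, hhq, hhx⟩; exact ⟨⟨hq, by omega, hhq⟩, hx, hhx⟩
  · rintro ⟨⟨hq, hN, hhq⟩, hx, hhx⟩; exact ⟨⟨hq, hx⟩, by omega, hhq, hhx⟩

lemma IsTuple.init_last {h : Fin m → ℕ} {a : ℕ} {p : Fin (m + 1) → List ℤ}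
    (hp : IsTuple N (Fin.snoc h a) p) :
    IsTuple (N - (p (Fin.last m)).length) h (Fin.init p) ∧ IsDyckPath (p (Fin.last m)) ∧
      pathHeight (p (Fin.last m)) = a := by
  rw [← Fin.snoc_init_self p, isTuple_snoc] at hp
  exact hp

instance (N : ℤ) (h : Fin m → ℕ) : Finite {p // IsTuple N h p} := by
  have := (finite_unitSteps_length_le N.toNat).to_subtype
  refine Finite.of_injective (β := Fin m → {l : List ℤ | l.length ≤ N.toNat ∧ UnitSteps l})
    (fun p i => ⟨p.1 i, ?_, (p.2.1 i).1⟩) ?_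
  · have := Finset.single_le_sum (f := fun j => ((p.1 j).length : ℤ)) (fun _ _ => by positivity)
      (Finset.mem_univ i)
    have := p.2.2.1
    omega
  · intro p q hpq
    exact Subtype.ext (funext fun i => congrArg Subtype.val (congrFun hpq i))

end Tuples

section Split

open Decomposition

abbrev DyckPathsOfHeight (a : ℕ) := {x : List ℤ // IsDyckPath x ∧ pathHeight x = a}

abbrev SplitPairs (b : ℕ) := {st : List ℤ × List ℤ //
  IsDyckPath st.1 ∧ pathHeight st.1 = b ∧
    IsDyckPath st.2 ∧ 1 ≤ pathHeight st.2 ∧ pathHeight st.2 ≤ b + 1}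

noncomputable def peakSplitEquiv (b : ℕ) : DyckPathsOfHeight (b + 1) ≃ SplitPairs b where
  toFun x := ⟨(ofPath b x.1).toPair, (isValid_ofPath x.2.2 x.2.1).toPair_mem⟩
  invFun st :=
    have hD := isValid_ofPair st.2.1 st.2.2.1 st.2.2.2.1 st.2.2.2.2.1 st.2.2.2.2.2
    ⟨(ofPair b st.1).toPath, hD.isDyckPath_toPath, hD.pathHeight_toPath⟩
  left_inv x := Subtype.ext <| by
    simp only [(isValid_ofPath x.2.2 x.2.1).ofPair_toPair, toPath_ofPath x.2.2 x.2.1]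
  right_inv := by
    rintro ⟨⟨σ, τ⟩, hσ, hσh, hτ, hτ1, hτb⟩
    have hD := isValid_ofPair hσ hσh hτ hτ1 hτb
    exact Subtype.ext <| by simp only [hD.ofPath_toPath, toPair_ofPair hσh hτ hτ1 hτb]

lemma length_peakSplitEquiv (b : ℕ) (x : DyckPathsOfHeight (b + 1)) :
    ((peakSplitEquiv b x).1.1.length + (peakSplitEquiv b x).1.2.length : ℤ) = x.1.length := by
  have := length_toPath (ofPath b x.1)
  rw [toPath_ofPath x.2.2 x.2.1] at this
  exact_mod_cast this.symm

end Split

section TupleSplit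

variable {m : ℕ} {N : ℤ} {h : Fin m → ℕ} {b : ℕ}

noncomputable def splitLast (p : {p // IsTuple N (Fin.snoc h (b + 1)) p}) :
    Σ y : Finset.Icc 1 (b + 1), {q // IsTuple N (Fin.snoc (Fin.snoc h b) y) q} :=
  let hp := p.2.init_last
  let st := peakSplitEquiv b ⟨p.1 (Fin.last m), hp.2⟩
  ⟨⟨pathHeight st.1.2, Finset.mem_Icc.mpr st.2.2.2.2⟩,
    Fin.snoc (Fin.snoc (Fin.init p.1) st.1.1) st.1.2,
    isTuple_snoc.mpr ⟨isTuple_snoc.mpr ⟨by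
      convert hp.1 using 1; linarith [length_peakSplitEquiv b ⟨p.1 (Fin.last m), hp.2⟩],
      st.2.1, st.2.2.1⟩, st.2.2.2.1, rfl⟩⟩

def lastTwo (z : Σ y : Finset.Icc 1 (b + 1), {q // IsTuple N (Fin.snoc (Fin.snoc h b) y) q}) :
    SplitPairs b :=
  ⟨(Fin.init z.2.1 (Fin.last m), z.2.1 (Fin.last (m + 1))), by
    have hq := z.2.2.init_last
    have hq' := hq.1.init_last
    rw [hq.2.2]
    exact ⟨hq'.2.1, hq'.2.2, hq.2.1, Finset.mem_Icc.mp z.1.2⟩⟩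

noncomputable def mergeLast
    (z : Σ y : Finset.Icc 1 (b + 1), {q // IsTuple N (Fin.snoc (Fin.snoc h b) y) q}) :
    {p // IsTuple N (Fin.snoc h (b + 1)) p} :=
  let x := (peakSplitEquiv b).symm (lastTwo z)
  ⟨Fin.snoc (Fin.init (Fin.init z.2.1)) x.1, isTuple_snoc.mpr ⟨by
    convert z.2.2.init_last.1.init_last.1 using 1
    have := length_peakSplitEquiv b x
    rw [Equiv.apply_symm_apply] at this
    dsimp only [lastTwo] at this
    linarith, x.2.1, x.2.2⟩⟩

lemma lastTwo_splitLast (p : {p // IsTuple N (Fin.snoc h (b + 1)) p}) :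
    lastTwo (splitLast p) = peakSplitEquiv b ⟨p.1 (Fin.last m), p.2.init_last.2⟩ := by
  simp [lastTwo, splitLast, Fin.init_snoc]

lemma mergeLast_splitLast (p : {p // IsTuple N (Fin.snoc h (b + 1)) p}) :
    mergeLast (splitLast p) = p := by
  apply Subtype.ext
  simp only [mergeLast, lastTwo_splitLast, Equiv.symm_apply_apply]
  simp [splitLast, Fin.init_snoc]

lemma splitLast_mergeLast
    (z : Σ y : Finset.Icc 1 (b + 1), {q // IsTuple N (Fin.snoc (Fin.snoc h b) y) q}) :
    splitLast (mergeLast z) = z := by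
  have hx : (⟨(mergeLast z).1 (Fin.last m), (mergeLast z).2.init_last.2⟩ :
      DyckPathsOfHeight (b + 1)) = (peakSplitEquiv b).symm (lastTwo z) :=
    Subtype.ext (by simp [mergeLast])
  refine Sigma.subtype_ext (Subtype.ext ?_) ?_
  · simp only [splitLast, hx, Equiv.apply_symm_apply]
    exact z.2.2.init_last.2.2
  · simp only [splitLast, hx, Equiv.apply_symm_apply]
    simp [lastTwo, mergeLast, Fin.init_snoc]

noncomputable def tupleSplitEquiv :
    {p // IsTuple N (Fin.snoc h (b + 1)) p} ≃
      Σ y : Finset.Icc 1 (b + 1), {q // IsTuple N (Fin.snoc (Fin.snoc h b) y) q} where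
  toFun := splitLast
  invFun := mergeLast
  left_inv := mergeLast_splitLast
  right_inv := splitLast_mergeLast

lemma card_isTuple_snoc (N : ℤ) (h : Fin m → ℕ) (b : ℕ) :
    Nat.card {p // IsTuple N (Fin.snoc h (b + 1)) p} =
      ∑ y ∈ Finset.Icc 1 (b + 1), Nat.card {q // IsTuple N (Fin.snoc (Fin.snoc h b) y) q} := by
  rw [Nat.card_congr tupleSplitEquiv, Nat.card_sigma]
  exact Finset.sum_coe_sort (Finset.Icc 1 (b + 1))
    fun y => Nat.card {q // IsTuple N (Fin.snoc (Fin.snoc h b) y) q}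

end TupleSplit

lemma P_ofFn (n : ℤ) {m : ℕ} (h : Fin m → ℕ) :
    P n (List.ofFn h) = Nat.card {p // IsTuple (2 * n) h p} := by
  have key : ∀ (a : List ℕ) (hlen : a.length = m), (∀ i, a.get i = h (Fin.cast hlen i)) →
      P n a = Nat.card {p // IsTuple (2 * n) h p} := by
    rintro a rfl hget
    obtain rfl : a.get = h := funext hget
    rfl
  exact key _ List.length_ofFn (List.get_ofFn h)

lemma ofFn_snoc {α : Type*} {m : ℕ} (f : Fin m → α) (x : α) :
    List.ofFn (Fin.snoc f x : Fin (m + 1) → α) = List.ofFn f ++ [x] := by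
  rw [List.ofFn_succ']
  simp

end PathHeight

/-- For `n ≥ 0`, nonnegative integers `a₁,…,a_{m-1}` (the list `l`) and `aₘ ≥ 1`,
`P_n(a₁,…,a_{m-1},aₘ) = ∑_{y=1}^{aₘ} P_n(a₁,…,a_{m-1}, aₘ−1, y)`. -/
theorem path_height_splitter (n : ℕ) (l : List ℕ) (am : ℕ) (ham : 1 ≤ am) :
    P (n : ℤ) (l ++ [am]) = ∑ y ∈ Finset.Icc 1 am, P (n : ℤ) (l ++ [am - 1, y]) := by
  obtain ⟨b, rfl⟩ := Nat.exists_eq_add_of_le' ham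
  have hl : List.ofFn l.get = l := List.ofFn_get l
  rw [← hl, ← PathHeight.ofFn_snoc, PathHeight.P_ofFn, PathHeight.card_isTuple_snoc]
  refine Finset.sum_congr rfl fun y _ => ?_
  rw [Nat.add_sub_cancel, ← List.singleton_append, ← List.append_assoc,
    ← PathHeight.ofFn_snoc, ← PathHeight.ofFn_snoc, PathHeight.P_ofFn]
end

section
/- For integers n ≥ 1, m ≥ 1, nonnegative integers a_1,…,a_{m-1}, and a_m ≥ 1, one has P_n(a_1,…,a_{m-1},a_m) = P_{n-1}(a_1,…,a_{m-1}, a_m − 1) − P_{n-1}(a_1,…,a_{m-1}, a_m, a_m − 1) + 2·P_{n-1}(a_1,…,a_{m-1}, a_m) − P_{n-1}(a_1,…,a_{m-1}, a_m, a_m) + P_{n-1}(a_1,…,a_{m-1}, a_m + 1) − P_{n-1}(a_1,…,a_{m-1}, a_m, a_m + 1). -/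
open PowerSeries Finset

section CountGF

variable (R : Type*) [CommSemiring R] {α β : Type*}

noncomputable def countGF (f : α → ℕ) : R⟦X⟧ :=
  mk fun k => (Nat.card {x // f x = k} : R)

variable {R}

theorem coeff_countGF (f : α → ℕ) (k : ℕ) :
    coeff k (countGF R f) = Nat.card {x // f x = k} :=
  coeff_mk _ _

theorem countGF_congr (e : α ≃ β) {f : α → ℕ} {g : β → ℕ} (h : ∀ x, g (e x) = f x) :
    countGF R f = countGF R g := by
  ext k
  simp only [coeff_countGF]
  exact congrArg _ (Nat.card_congr (e.subtypeEquiv fun x => by rw [h]))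

theorem countGF_unique [Unique α] : countGF R (fun _ : α => 0) = 1 := by
  ext k
  rcases k with _ | k <;> simp [coeff_countGF, coeff_one]

theorem countGF_option (f : α → ℕ) :
    countGF R (fun o : Option α => o.elim 0 (f · + 1)) = 1 + X * countGF R f := by
  ext k
  rcases k with _ | k
  · have hnone : Nat.card {o : Option α // o.elim 0 (f · + 1) = 0} = 1 :=
      Nat.card_eq_one_iff_exists.2 ⟨⟨none, rfl⟩, by
        rintro ⟨_ | x, hx⟩
        · rfl
        · simp at hx⟩
    simp [coeff_countGF, hnone]
  · let e : {x // f x = k} ≃ {o : Option α // o.elim 0 (f · + 1) = k + 1} :=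
      Equiv.ofBijective (fun x => ⟨some x, by simp [x.2]⟩)
        ⟨fun x y hxy => by simpa [Subtype.ext_iff] using hxy, by
          rintro ⟨_ | x, hx⟩
          · simp at hx
          · exact ⟨⟨x, by simpa using hx⟩, rfl⟩⟩
    simp [coeff_countGF, coeff_succ_X_mul, ← Nat.card_congr e]

theorem countGF_sumElim {f : α → ℕ} {g : β → ℕ} (hf : ∀ k, Finite {x // f x = k})
    (hg : ∀ k, Finite {y // g y = k}) :
    countGF R (Sum.elim f g) = countGF R f + countGF R g := by
  ext k
  simp only [coeff_countGF, map_add, ← Nat.cast_add, ← Nat.card_sum]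
  exact congrArg _ (Nat.card_congr Equiv.subtypeSum)

theorem countGF_prod {f : α → ℕ} {g : β → ℕ} (hf : ∀ k, Finite {x // f x = k})
    (hg : ∀ k, Finite {y // g y = k}) :
    countGF R (fun z : α × β => f z.1 + g z.2) = countGF R f * countGF R g := by
  ext n
  let e : {z : α × β // f z.1 + g z.2 = n} ≃
      Σ ij : antidiagonal n, {x // f x = ij.1.1} × {y // g y = ij.1.2} :=
    { toFun := fun z => ⟨⟨(f z.1.1, g z.1.2), mem_antidiagonal.2 z.2⟩,
        ⟨z.1.1, rfl⟩, ⟨z.1.2, rfl⟩⟩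
      invFun := fun w => ⟨(w.2.1, w.2.2), by
        rw [w.2.1.2, w.2.2.2]; exact mem_antidiagonal.1 w.1.2⟩
      left_inv := fun z => rfl
      right_inv := by
        rintro ⟨⟨⟨i, j⟩, hij⟩, ⟨x, hx⟩, ⟨y, hy⟩⟩
        dsimp only at hx hy
        subst hx hy
        rfl }
  rw [coeff_countGF, coeff_mul, Nat.card_congr e, Nat.card_sigma, Nat.cast_sum]
  simp only [Nat.card_prod, Nat.cast_mul, coeff_countGF]
  exact sum_coe_sort (antidiagonal n)
    fun ij : ℕ × ℕ => (Nat.card {x // f x = ij.1} * Nat.card {y // g y = ij.2} : R)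

theorem finite_eq_of_finite_le {f : α → ℕ} {k : ℕ} (h : Finite {x // f x ≤ k}) :
    Finite {x // f x = k} :=
  Finite.of_injective (fun x => (⟨x.1, x.2.le⟩ : {x // f x ≤ k}))
    fun _ _ hxy => Subtype.ext (Subtype.mk.inj hxy)

theorem finite_sum_le {m : ℕ} {A : Fin m → Type*} {deg : ∀ i, A i → ℕ}
    (h : ∀ i k, Finite {x // deg i x ≤ k}) (k : ℕ) :
    Finite {x : ∀ i, A i // ∑ i, deg i (x i) ≤ k} :=
  Finite.of_injective
    (fun x i => (⟨x.1 i, (single_le_sum (fun j _ => Nat.zero_le (deg j (x.1 j)))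
      (mem_univ i)).trans x.2⟩ : {y // deg i y ≤ k}))
    fun _ _ hxy => Subtype.ext (funext fun i => congrArg Subtype.val (congrFun hxy i))

theorem countGF_pi {m : ℕ} {A : Fin m → Type*} (deg : ∀ i, A i → ℕ)
    (h : ∀ i k, Finite {x // deg i x ≤ k}) :
    countGF R (fun x : ∀ i, A i => ∑ i, deg i (x i)) = ∏ i, countGF R (deg i) := by
  induction m with
  | zero =>
    simp only [univ_eq_empty, sum_empty, prod_empty]
    exact countGF_unique
  | succ m ih =>
    rw [Fin.prod_univ_succ, ← ih (fun i => deg i.succ) (fun i => h i.succ),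
      ← countGF_prod (fun k => finite_eq_of_finite_le (h 0 k))
        (fun k => finite_eq_of_finite_le (finite_sum_le (fun i => h i.succ) k))]
    refine (countGF_congr (Fin.consEquiv A) fun z => ?_).symm
    simp [Fin.sum_univ_succ, Fin.consEquiv]

end CountGF

theorem sum_take_append {M : Type*} [AddMonoid M] (p q : List M) (k : ℕ) :
    ((p ++ q).take k).sum = (p.take k).sum + (q.take (k - p.length)).sum := by
  rw [List.take_append, List.sum_append]

theorem sum_take_of_length_le {M : Type*} [AddMonoid M] {p : List M} {k : ℕ}
    (hk : p.length ≤ k) :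
    (p.take k).sum = p.sum := by
  rw [List.take_of_length_le hk]

theorem pathHeight_le_iff {p : List ℤ} {m : ℕ} :
    pathHeight p ≤ m ↔ ∀ k, ((p.take k).sum).toNat ≤ m := by
  refine Finset.sup_le_iff.trans ⟨fun h k => ?_, fun h k _ => h k⟩
  rw [List.take_eq_take_min]
  exact h _ (Finset.mem_range.2 (Nat.lt_succ_of_le (min_le_right _ _)))

theorem toNat_sum_take_le_pathHeight (p : List ℤ) (k : ℕ) :
    ((p.take k).sum).toNat ≤ pathHeight p :=
  pathHeight_le_iff.1 le_rfl k

theorem sum_take_succ_lift_of_le (p : List ℤ) {k : ℕ} (hk : k ≤ p.length) :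
    ((1 :: p ++ [-1]).take (k + 1)).sum = (p.take k).sum + 1 := by
  simp [sum_take_append, Nat.sub_eq_zero_of_le hk, add_comm]

theorem sum_take_succ_lift_of_lt (p : List ℤ) {k : ℕ} (hk : p.length < k) :
    ((1 :: p ++ [-1]).take (k + 1)).sum = p.sum := by
  rw [sum_take_of_length_le (by simpa using hk)]
  simp

theorem pathHeight_nil : pathHeight [] = 0 := by
  simp [pathHeight]

theorem pathHeight_append {p : List ℤ} (q : List ℤ) (hp : p.sum = 0) :
    pathHeight (p ++ q) = max (pathHeight p) (pathHeight q) := by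
  refine eq_of_forall_ge_iff fun m => ?_
  simp only [max_le_iff, pathHeight_le_iff, sum_take_append]
  constructor
  · intro h
    refine ⟨fun k => ?_, fun j => ?_⟩
    · rcases le_or_gt k p.length with hk | hk
      · simpa [Nat.sub_eq_zero_of_le hk] using h k
      · simp [sum_take_of_length_le hk.le, hp]
    · simpa [sum_take_of_length_le (Nat.le_add_right _ j), hp] using h (p.length + j)
  · rintro ⟨hp', hq'⟩ k
    rcases le_or_gt k p.length with hk | hk
    · simpa [Nat.sub_eq_zero_of_le hk] using hp' k
    · simpa [sum_take_of_length_le hk.le, hp] using hq' _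

namespace IsDyckPath

theorem nil : IsDyckPath [] := ⟨by simp, by simp, by simp⟩

theorem append {p q : List ℤ} (hp : IsDyckPath p) (hq : IsDyckPath q) :
    IsDyckPath (p ++ q) := by
  refine ⟨fun s hs => (List.mem_append.1 hs).elim (hp.1 s) (hq.1 s), fun k => ?_, ?_⟩
  · rw [sum_take_append]
    exact add_nonneg (hp.2.1 k) (hq.2.1 _)
  · simp [hp.2.2, hq.2.2]

theorem lift {p : List ℤ} (hp : IsDyckPath p) : IsDyckPath (1 :: p ++ [-1]) := by
  refine ⟨?_, fun k => ?_, by simp [hp.2.2]⟩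
  · intro s hs
    simp only [List.cons_append, List.mem_cons, List.mem_append, List.not_mem_nil,
      or_false] at hs
    rcases hs with rfl | hs | rfl
    exacts [Or.inl rfl, hp.1 s hs, Or.inr rfl]
  · rcases k with _ | k
    · simp
    rcases le_or_gt k p.length with hk | hk
    · rw [sum_take_succ_lift_of_le p hk]
      linarith [hp.2.1 k]
    · rw [sum_take_succ_lift_of_lt p hk, hp.2.2]

theorem pathHeight_lift {p : List ℤ} (hp : IsDyckPath p) :
    pathHeight (1 :: p ++ [-1]) = pathHeight p + 1 := by
  refine le_antisymm (pathHeight_le_iff.2 fun k => ?_) ?_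
  · rcases k with _ | k
    · simp
    rcases le_or_gt k p.length with hk | hk
    · rw [sum_take_succ_lift_of_le p hk]
      have := toNat_sum_take_le_pathHeight p k
      have := hp.2.1 k
      omega
    · rw [sum_take_succ_lift_of_lt p hk, hp.2.2, Int.toNat_zero]
      exact Nat.zero_le _
  · have h1 : 1 ≤ pathHeight (1 :: p ++ [-1]) := by
      have := toNat_sum_take_le_pathHeight (1 :: p ++ [-1]) 1
      rwa [List.cons_append, List.take_succ_cons, List.take_zero, List.sum_singleton] at this
    have h2 : pathHeight p ≤ pathHeight (1 :: p ++ [-1]) - 1 := by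
      refine pathHeight_le_iff.2 fun k => ?_
      rcases le_or_gt k p.length with hk | hk
      · have := toNat_sum_take_le_pathHeight (1 :: p ++ [-1]) (k + 1)
        rw [sum_take_succ_lift_of_le p hk] at this
        omega
      · simp [sum_take_of_length_le hk.le, hp.2.2]
    omega

theorem even_length {p : List ℤ} (hp : IsDyckPath p) : Even p.length := by
  suffices h : ∀ q : List ℤ, (∀ s ∈ q, s = 1 ∨ s = -1) → (q.length : ℤ) % 2 = q.sum % 2 by
    have := h p hp.1
    rw [hp.2.2] at this
    exact Nat.even_iff.2 (by omega)
  intro q hq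
  induction q with
  | nil => simp
  | cons x t ih =>
    have := ih fun s hs => hq s (by simp [hs])
    simp only [List.length_cons, List.sum_cons, Nat.cast_add, Nat.cast_one]
    rcases hq x (by simp) with rfl | rfl <;> omega

theorem eq_nil_of_pathHeight_eq_zero {p : List ℤ} (hp : IsDyckPath p) (h : pathHeight p = 0) :
    p = [] := by
  rcases p with _ | ⟨x, t⟩
  · rfl
  have h1 := toNat_sum_take_le_pathHeight (x :: t) 1
  have h2 := hp.2.1 1
  simp only [List.take_succ_cons, List.take_zero, List.sum_cons, List.sum_nil, add_zero] at h1 h2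
  rcases hp.1 x (by simp) with rfl | rfl <;> omega

end IsDyckPath

theorem exists_eq_append_neg_one_append {q : List ℤ} (hpm : ∀ s ∈ q, s = 1 ∨ s = -1)
    (hge : ∀ j, -1 ≤ (q.take j).sum) (hsum : q.sum = -1) :
    ∃ a b, IsDyckPath a ∧ IsDyckPath b ∧ q = a ++ -1 :: b := by
  classical
  have hex : ∃ k, (q.take (k + 1)).sum < 0 :=
    ⟨q.length, by rw [sum_take_of_length_le (Nat.le_succ _)]; omega⟩
  set k := Nat.find hex
  have hneg : (q.take (k + 1)).sum < 0 := Nat.find_spec hex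
  have hnonneg : ∀ j ≤ k, 0 ≤ (q.take j).sum := by
    rintro (_ | j) hj
    · simp
    · exact not_lt.1 (Nat.find_min hex (Nat.lt_of_succ_le hj))
  have hk : k < q.length := by
    by_contra! hk
    have := hnonneg k le_rfl
    rw [sum_take_of_length_le (Nat.le_succ_of_le hk)] at hneg
    rw [sum_take_of_length_le hk] at this
    linarith
  have hstep := List.sum_take_succ q k hk
  have hqk : q[k] = -1 ∧ (q.take k).sum = 0 := by
    have := hnonneg k le_rfl
    rcases hpm _ (List.getElem_mem hk) with h | h <;> omega
  have hdecomp : q = q.take k ++ -1 :: q.drop (k + 1) := by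
    rw [← hqk.1, ← List.drop_eq_getElem_cons hk, List.take_append_drop]
  refine ⟨q.take k, q.drop (k + 1), ⟨fun s hs => hpm s (List.mem_of_mem_take hs), fun j => ?_,
    hqk.2⟩, ⟨fun s hs => hpm s (List.mem_of_mem_drop hs), fun j => ?_, ?_⟩, hdecomp⟩
  · rw [List.take_take]
    exact hnonneg _ (min_le_right _ _)
  · have := hge (k + 1 + j)
    rw [List.take_add, List.sum_append, hstep, hqk.1, hqk.2] at this
    linarith
  · have := congrArg List.sum (List.take_append_drop (k + 1) q)
    rw [List.sum_append, hstep, hqk.1, hqk.2, hsum] at this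
    linarith

namespace IsDyckPath

theorem exists_eq_lift_append {p : List ℤ} (hp : IsDyckPath p) (hne : p ≠ []) :
    ∃ a b, IsDyckPath a ∧ IsDyckPath b ∧ p = 1 :: a ++ -1 :: b := by
  obtain ⟨x, q, rfl⟩ := List.exists_cons_of_ne_nil hne
  have hx : x = 1 := by
    have := hp.2.1 1
    simp only [List.take_succ_cons, List.take_zero, List.sum_cons, List.sum_nil,
      add_zero] at this
    rcases hp.1 x (by simp) with h | h <;> omega
  subst hx
  have hsum : q.sum = -1 := by
    have := hp.2.2
    simp only [List.sum_cons] at this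
    omega
  have hge : ∀ j, -1 ≤ (q.take j).sum := fun j => by
    have := hp.2.1 (j + 1)
    simp only [List.take_succ_cons, List.sum_cons] at this
    omega
  obtain ⟨a, b, ha, hb, rfl⟩ :=
    exists_eq_append_neg_one_append (fun s hs => hp.1 s (by simp [hs])) hge hsum
  exact ⟨a, b, ha, hb, rfl⟩

theorem length_le_of_append_neg_one_eq {a a' b b' : List ℤ} (ha : IsDyckPath a)
    (ha' : IsDyckPath a') (h : a ++ -1 :: b = a' ++ -1 :: b') : a.length ≤ a'.length := by
  by_contra! hlt
  have h1 := congrArg (fun l => (l.take (a'.length + 1)).sum) h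
  simp only [sum_take_append, Nat.sub_eq_zero_of_le hlt, Nat.add_sub_cancel_left,
    sum_take_of_length_le (Nat.le_succ a'.length), ha'.2.2, List.take_zero, List.take_succ_cons,
    List.sum_nil, List.sum_cons] at h1
  have := ha.2.1 (a'.length + 1)
  omega

theorem lift_append_inj {a a' b b' : List ℤ} (ha : IsDyckPath a) (ha' : IsDyckPath a')
    (h : 1 :: a ++ -1 :: b = 1 :: a' ++ -1 :: b') : a = a' ∧ b = b' := by
  simp only [List.cons_append, List.cons.injEq, true_and] at h
  have hlen := (length_le_of_append_neg_one_eq ha ha' h).antisymm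
    (length_le_of_append_neg_one_eq ha' ha h.symm)
  obtain ⟨rfl, hb⟩ := List.append_inj h hlen
  exact ⟨rfl, (List.cons.inj hb).2⟩

theorem lift_append {a b : List ℤ} (ha : IsDyckPath a) (hb : IsDyckPath b) :
    IsDyckPath (1 :: a ++ -1 :: b) := by
  simpa using ha.lift.append hb

theorem pathHeight_lift_append {a : List ℤ} (b : List ℤ) (ha : IsDyckPath a) :
    pathHeight (1 :: a ++ -1 :: b) = max (pathHeight a + 1) (pathHeight b) := by
  have := pathHeight_append b ha.lift.2.2
  rw [ha.pathHeight_lift] at this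
  simpa using this

end IsDyckPath

theorem finite_setOf_isDyckPath_length_le (L : ℕ) :
    {p : List ℤ | IsDyckPath p ∧ p.length ≤ L}.Finite := by
  refine ((List.finite_length_le ({1, -1} : Set ℤ) L).image (List.map Subtype.val)).subset ?_
  rintro p ⟨⟨hpm, -, -⟩, hL⟩
  exact ⟨p.attachWith _ hpm, (List.length_attachWith).trans_le hL,
    List.attachWith_map_subtype_val hpm⟩

abbrev DyckPathWithHeightIn (s : Set ℕ) : Type :=
  {p : List ℤ // IsDyckPath p ∧ pathHeight p ∈ s}

namespace DyckPathWithHeightIn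

variable {s t : Set ℕ}

theorem finite_length_div_two_le (s : Set ℕ) (k : ℕ) :
    Finite {p : DyckPathWithHeightIn s // p.1.length / 2 ≤ k} := by
  have := (finite_setOf_isDyckPath_length_le (2 * k + 1)).to_subtype
  refine Finite.of_injective (fun p => (⟨p.1.1, p.1.2.1, by omega⟩ :
    {p : List ℤ | IsDyckPath p ∧ p.length ≤ 2 * k + 1})) fun p q h => ?_
  exact Subtype.ext (Subtype.ext (Subtype.mk.inj h))

theorem finite_length_div_two_eq (s : Set ℕ) (k : ℕ) :
    Finite {p : DyckPathWithHeightIn s // p.1.length / 2 = k} :=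
  finite_eq_of_finite_le (finite_length_div_two_le s k)

noncomputable def unionEquiv (hst : Disjoint s t) :
    DyckPathWithHeightIn s ⊕ DyckPathWithHeightIn t ≃ DyckPathWithHeightIn (s ∪ t) :=
  Equiv.ofBijective
    (Sum.elim (fun p => ⟨p.1, p.2.1, Or.inl p.2.2⟩) (fun p => ⟨p.1, p.2.1, Or.inr p.2.2⟩)) <| by
    refine ⟨?_, ?_⟩
    · rintro (p | p) (q | q) h <;> simp only [Sum.elim_inl, Sum.elim_inr, Subtype.mk.injEq] at h
      · exact congrArg Sum.inl (Subtype.ext h)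
      · exact (hst.ne_of_mem p.2.2 (h ▸ q.2.2) rfl).elim
      · exact (hst.ne_of_mem q.2.2 (h ▸ p.2.2) rfl).elim
      · exact congrArg Sum.inr (Subtype.ext h)
    · rintro ⟨p, hp, hs | ht⟩
      exacts [⟨Sum.inl ⟨p, hp, hs⟩, rfl⟩, ⟨Sum.inr ⟨p, hp, ht⟩, rfl⟩]

noncomputable def firstReturnEquiv (h : ℕ) :
    Option (DyckPathWithHeightIn (Set.Iic h) × DyckPathWithHeightIn (Set.Iic (h + 1))) ≃
      DyckPathWithHeightIn (Set.Iic (h + 1)) :=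
  Equiv.ofBijective
    (fun o => o.elim ⟨[], IsDyckPath.nil, by simp [pathHeight_nil]⟩ fun z =>
      ⟨1 :: z.1.1 ++ -1 :: z.2.1, z.1.2.1.lift_append z.2.2.1, by
        rw [Set.mem_Iic, z.1.2.1.pathHeight_lift_append]
        exact max_le (Nat.succ_le_succ z.1.2.2) z.2.2.2⟩) <| by
    refine ⟨?_, ?_⟩
    · rintro (_ | ⟨a, b⟩) (_ | ⟨a', b'⟩) h <;> simp only [Option.elim, Subtype.mk.injEq] at h
      · rfl
      · simp at h
      · simp at h
      · obtain ⟨ha, hb⟩ := a.2.1.lift_append_inj a'.2.1 h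
        rw [Subtype.ext ha, Subtype.ext hb]
    · rintro ⟨p, hp, hh⟩
      rcases eq_or_ne p [] with rfl | hne
      · exact ⟨none, rfl⟩
      obtain ⟨a, b, ha, hb, rfl⟩ := hp.exists_eq_lift_append hne
      rw [Set.mem_Iic, ha.pathHeight_lift_append, max_le_iff] at hh
      exact ⟨some (⟨a, ha, Nat.le_of_succ_le_succ hh.1⟩, ⟨b, hb, hh.2⟩), rfl⟩

end DyckPathWithHeightIn

open DyckPathWithHeightIn

noncomputable def heightGF (s : Set ℕ) : ℤ⟦X⟧ :=
  countGF ℤ fun p : DyckPathWithHeightIn s => p.1.length / 2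

theorem heightGF_union {s t : Set ℕ} (hst : Disjoint s t) :
    heightGF (s ∪ t) = heightGF s + heightGF t := by
  rw [heightGF, ← countGF_congr (unionEquiv hst) (g := fun p => p.1.length / 2)
    (f := Sum.elim _ _) (by rintro (p | p) <;> rfl)]
  exact countGF_sumElim (finite_length_div_two_eq s) (finite_length_div_two_eq t)

theorem heightGF_Iic_zero : heightGF (Set.Iic 0) = 1 := by
  have hnil (p : DyckPathWithHeightIn (Set.Iic 0)) : p.1 = [] :=
    p.2.1.eq_nil_of_pathHeight_eq_zero (Nat.le_zero.1 p.2.2)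
  let _ : Unique (DyckPathWithHeightIn (Set.Iic 0)) :=
    { default := ⟨[], IsDyckPath.nil, by simp [pathHeight_nil]⟩
      uniq := fun p => Subtype.ext (hnil p) }
  have hdeg : (fun p : DyckPathWithHeightIn (Set.Iic 0) => p.1.length / 2) = fun _ => 0 :=
    funext fun p => by simp [hnil p]
  rw [heightGF, hdeg, countGF_unique]

theorem heightGF_Iic_succ (h : ℕ) :
    heightGF (Set.Iic (h + 1)) =
      1 + X * (heightGF (Set.Iic h) * heightGF (Set.Iic (h + 1))) := by
  calc heightGF (Set.Iic (h + 1))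
      = countGF ℤ fun o => o.elim 0 fun z => (z.1.1.length / 2 + z.2.1.length / 2) + 1 :=
        (countGF_congr (firstReturnEquiv h) ?_).symm
    _ = _ := by
      rw [countGF_option, countGF_prod (finite_length_div_two_eq _) (finite_length_div_two_eq _)]
      rfl
  rintro (_ | ⟨a, b⟩)
  · simp [firstReturnEquiv]
  · obtain ⟨i, hi⟩ := a.2.1.even_length
    obtain ⟨j, hj⟩ := b.2.1.even_length
    simp only [firstReturnEquiv, Equiv.ofBijective_apply, Option.elim, List.length_append,
      List.length_cons, hi, hj]
    omega

theorem heightGF_singleton_zero : heightGF {0} = 1 := by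
  rw [← heightGF_Iic_zero]
  congr 1
  ext x
  simp

theorem heightGF_singleton_succ_eq_sub (h : ℕ) :
    heightGF {h + 1} = heightGF (Set.Iic (h + 1)) - heightGF (Set.Iic h) := by
  rw [eq_sub_iff_add_eq, ← heightGF_union (Set.disjoint_singleton_left.2 (by simp))]
  congr 1
  ext x
  simp only [Set.mem_Iic, Set.mem_union, Set.mem_singleton_iff]
  omega

theorem heightGF_singleton_succ (a : ℕ) :
    heightGF {a + 1} = X * (heightGF {a} * (1 - heightGF {a + 1}) + 2 * heightGF {a + 1}
      - heightGF {a + 1} ^ 2 + heightGF {a + 2} * (1 - heightGF {a + 1})) := by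
  -- `u` stands for `G_{a-1}`, which is `0` when `a = 0`.
  obtain ⟨u, hu, hFa⟩ : ∃ u, heightGF (Set.Iic a) = 1 + X * (u * heightGF (Set.Iic a)) ∧
      heightGF {a} = heightGF (Set.Iic a) - u := by
    rcases a with _ | b
    · exact ⟨0, by simp [heightGF_Iic_zero], by simp [heightGF_Iic_zero, heightGF_singleton_zero]⟩
    · exact ⟨_, heightGF_Iic_succ b, heightGF_singleton_succ_eq_sub b⟩
  rw [hFa, heightGF_singleton_succ_eq_sub a, heightGF_singleton_succ_eq_sub (a + 1)]
  linear_combination (X * heightGF (Set.Iic (a + 1)) - 1) * hu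
    + (1 + X * heightGF (Set.Iic (a + 2)) - X * u) * heightGF_Iic_succ a
    - X * heightGF (Set.Iic a) * heightGF_Iic_succ (a + 1)

theorem sum_length_eq_two_mul_iff {ι : Type*} (s : Finset ι) {l : ι → List ℤ}
    (hl : ∀ i, Even (l i).length) (n : ℕ) :
    ∑ i ∈ s, ((l i).length : ℤ) = 2 * n ↔ ∑ i ∈ s, (l i).length / 2 = n := by
  have : ∑ i ∈ s, ((l i).length : ℤ) = 2 * ((∑ i ∈ s, (l i).length / 2 : ℕ) : ℤ) := by
    push_cast
    rw [Finset.mul_sum]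
    refine Finset.sum_congr rfl fun i _ => ?_
    obtain ⟨k, hk⟩ := hl i
    rw [hk]
    omega
  omega

theorem P_eq_coeff_prod_heightGF (n : ℕ) (a : List ℕ) :
    (P n a : ℤ) = coeff n ((a.map fun c => heightGF {c}).prod) := by
  rw [← Fin.prod_univ_fun_getElem]
  simp only [heightGF]
  rw [← countGF_pi _ fun i => finite_length_div_two_le _, coeff_countGF, P]
  congr 1
  exact Nat.card_congr
    { toFun := fun p => ⟨fun i => ⟨p.1 i, p.2.1 i, p.2.2.2 i⟩,
        (sum_length_eq_two_mul_iff _ (fun i => (p.2.1 i).even_length) n).1 p.2.2.1⟩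
      invFun := fun x => ⟨fun i => (x.1 i).1, fun i => (x.1 i).2.1,
        (sum_length_eq_two_mul_iff _ (fun i => (x.1 i).2.1.even_length) n).2 x.2,
        fun i => (x.1 i).2.2⟩
      left_inv := fun _ => rfl
      right_inv := fun _ => rfl }

/-- For `n ≥ 1`, nonnegative integers `a₁,…,a_{m-1}` (the list `l`) and `aₘ ≥ 1`,
`P_n(a₁,…,aₘ) = P_{n-1}(…, aₘ−1) − P_{n-1}(…, aₘ, aₘ−1) + 2·P_{n-1}(…, aₘ)
  − P_{n-1}(…, aₘ, aₘ) + P_{n-1}(…, aₘ+1) − P_{n-1}(…, aₘ, aₘ+1)`. -/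
theorem path_height_shorten (n : ℕ) (hn : 1 ≤ n) (l : List ℕ) (am : ℕ) (ham : 1 ≤ am) :
    (P (n : ℤ) (l ++ [am]) : ℤ) =
      P ((n : ℤ) - 1) (l ++ [am - 1]) - P ((n : ℤ) - 1) (l ++ [am, am - 1])
        + 2 * P ((n : ℤ) - 1) (l ++ [am]) - P ((n : ℤ) - 1) (l ++ [am, am])
        + P ((n : ℤ) - 1) (l ++ [am + 1]) - P ((n : ℤ) - 1) (l ++ [am, am + 1]) := by
  obtain ⟨a, rfl⟩ : ∃ a, am = a + 1 := ⟨am - 1, by omega⟩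
  obtain ⟨m, rfl⟩ : ∃ m, n = m + 1 := ⟨n - 1, by omega⟩
  have hm : ((m + 1 : ℕ) : ℤ) - 1 = m := by push_cast; ring
  simp only [hm, Nat.add_sub_cancel, P_eq_coeff_prod_heightGF, List.map_append, List.map_cons,
    List.map_nil, List.prod_append, List.prod_cons, List.prod_nil, mul_one]
  conv_lhs => rw [heightGF_singleton_succ a, mul_left_comm, coeff_succ_X_mul]
  simp only [two_mul, ← map_add, ← map_sub]
  congr 1
  ring
end
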